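/- Let f : Y × X → [0,1] be a probability density kernel (so that y ↦ f(y;x) is a probability density on Y with respect to the reference measure dy for each x ∈ X), and let k be a bounded, measurable, symmetric, positive-definite kernel on Y × Y. Then k_f(x₁,x₂) := ∬_{Y×Y} k(y₁,y₂) f(y₁;x₁) f(y₂;x₂) dy₁ dy₂ is a bounded, measurable, symmetric, positive-definite kernel on X × X, and for any random probability measures P̃₁, P̃₂ on X one has Cov_k(f_{P̃₁}, f_{P̃₂}) = Cov_{k_f}(P̃₁, P̃₂), where f_P denotes the random probability on Y with density f_P(y) = ∫_X f(y;x) dP(x). Moreover, if the family {f(·;x)}_x is identifiable and k is characteristic, then k_f is characteristic. -/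

import Mathlib

open MeasureTheory ProbabilityTheory Filter
open scoped RealInnerProductSpace ENNReal NNReal

noncomputable section

/-- A positive-definite function `k`. -/
def IsPosDef {X : Type*} (k : X → X → ℝ) : Prop :=
  ∀ (n : ℕ) (x : Fin n → X) (c : Fin n → ℝ),
    0 ≤ ∑ i : Fin n, ∑ j : Fin n, c i * c j * k (x i) (x j)

/-- A bounded, measurable, symmetric, positive-definite kernel. -/
structure IsKernel {X : Type*} [MeasurableSpace X] (k : X → X → ℝ) : Prop where
  measurable : Measurable (Function.uncurry k)
  bounded : ∃ C : ℝ, ∀ x y, |k x y| ≤ C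
  symm : ∀ x y, k x y = k y x
  posDef : IsPosDef k

/-- A realization of the reproducing kernel Hilbert space of `k`: a Hilbert space together with
a feature map reproducing `k` whose feature vectors span a dense subspace. -/
structure FeatureMap {X : Type*} [MeasurableSpace X] (k : X → X → ℝ)
    (H : Type*) [NormedAddCommGroup H] [InnerProductSpace ℝ H] : Type _ where
  toFun : X → H
  stronglyMeasurable : StronglyMeasurable toFun
  repro : ∀ x y, ⟪toFun x, toFun y⟫ = k x y
  dense_span : Dense (Submodule.span ℝ (Set.range toFun) : Set H)

/-- Kernel mean embedding of a measure, as a Bochner integral of the feature map. -/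
def meanEmb {X : Type*} [MeasurableSpace X] {k : X → X → ℝ} {H : Type*}
    [NormedAddCommGroup H] [InnerProductSpace ℝ H] [CompleteSpace H]
    (F : FeatureMap k H) (μ : Measure X) : H :=
  ∫ x, F.toFun x ∂μ

/-- Kernel covariance of two random probability measures,
`Cov_k(P₁,P₂) = E[⟪μ_k(P₁) - E[μ_k(P₁)], μ_k(P₂) - E[μ_k(P₂)]⟫]`. -/
def kerCov {X : Type*} [MeasurableSpace X] {k : X → X → ℝ} {H : Type*}
    [NormedAddCommGroup H] [InnerProductSpace ℝ H] [CompleteSpace H]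
    {Ω : Type*} [MeasurableSpace Ω]
    (F : FeatureMap k H) (Pr : Measure Ω) (P₁ P₂ : Ω → Measure X) : ℝ :=
  ∫ ω, ⟪meanEmb F (P₁ ω) - ∫ ω', meanEmb F (P₁ ω') ∂Pr,
        meanEmb F (P₂ ω) - ∫ ω', meanEmb F (P₂ ω') ∂Pr⟫ ∂Pr

/-- Kernel variance of a random probability measure. -/
def kerVar {X : Type*} [MeasurableSpace X] {k : X → X → ℝ} {H : Type*}
    [NormedAddCommGroup H] [InnerProductSpace ℝ H] [CompleteSpace H]
    {Ω : Type*} [MeasurableSpace Ω]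
    (F : FeatureMap k H) (Pr : Measure Ω) (P : Ω → Measure X) : ℝ :=
  kerCov F Pr P P

/-- Kernel correlation of two random probability measures. -/
def kerCorr {X : Type*} [MeasurableSpace X] {k : X → X → ℝ} {H : Type*}
    [NormedAddCommGroup H] [InnerProductSpace ℝ H] [CompleteSpace H]
    {Ω : Type*} [MeasurableSpace Ω]
    (F : FeatureMap k H) (Pr : Measure Ω) (P₁ P₂ : Ω → Measure X) : ℝ :=
  kerCov F Pr P₁ P₂ / (Real.sqrt (kerVar F Pr P₁) * Real.sqrt (kerVar F Pr P₂))

/-- Covariance of two real random variables. -/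
def rCov {Ω : Type*} [MeasurableSpace Ω] (Pr : Measure Ω) (U V : Ω → ℝ) : ℝ :=
  ∫ ω, (U ω - ∫ ω', U ω' ∂Pr) * (V ω - ∫ ω', V ω' ∂Pr) ∂Pr

/-- Variance of a real random variable. -/
def rVar {Ω : Type*} [MeasurableSpace Ω] (Pr : Measure Ω) (U : Ω → ℝ) : ℝ :=
  rCov Pr U U

/-- Pearson correlation of two real random variables. -/
def rCorr {Ω : Type*} [MeasurableSpace Ω] (Pr : Measure Ω) (U V : Ω → ℝ) : ℝ :=
  rCov Pr U V / (Real.sqrt (rVar Pr U) * Real.sqrt (rVar Pr V))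

end

noncomputable section

/-- A probability density kernel `f : Y × X → [0,1]` with respect to the reference
measure `ν` on `Y`. -/
structure IsDensityKernel {Y X : Type*} [MeasurableSpace Y] [MeasurableSpace X]
    (ν : Measure Y) (f : Y → X → ℝ) : Prop where
  measurable : Measurable (Function.uncurry f)
  nonneg : ∀ y x, 0 ≤ f y x
  le_one : ∀ y x, f y x ≤ 1
  integral_one : ∀ x, ∫ y, f y x ∂ν = 1

/-- The mixture density `f_P(y) = ∫ f(y;x) dP(x)`. -/
def mixDensity {Y X : Type*} [MeasurableSpace X] (f : Y → X → ℝ) (P : Measure X) :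
    Y → ℝ := fun y => ∫ x, f y x ∂P

/-- The mixture measure on `Y` with density `f_P` with respect to `ν`. -/
def mixMeasure {Y X : Type*} [MeasurableSpace Y] [MeasurableSpace X]
    (ν : Measure Y) (f : Y → X → ℝ) (P : Measure X) : Measure Y :=
  ν.withDensity fun y => ENNReal.ofReal (mixDensity f P y)

/-- The updated kernel `k_f(x₁,x₂) = ∬ k(y₁,y₂) f(y₁;x₁) f(y₂;x₂) dy₁ dy₂`. -/
def updatedKernel {Y X : Type*} [MeasurableSpace Y] (ν : Measure Y)
    (k : Y → Y → ℝ) (f : Y → X → ℝ) : X → X → ℝ := fun x₁ x₂ =>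
  ∫ y₁, ∫ y₂, k y₁ y₂ * f y₁ x₁ * f y₂ x₂ ∂ν ∂ν

/-- The family `{f(·;x)}ₓ` is identifiable: mixtures determine the mixing measure. -/
def Identifiable {Y X : Type*} [MeasurableSpace Y] [MeasurableSpace X]
    (ν : Measure Y) (f : Y → X → ℝ) : Prop :=
  ∀ P₁ P₂ : Measure X, IsProbabilityMeasure P₁ → IsProbabilityMeasure P₂ →
    mixDensity f P₁ =ᵐ[ν] mixDensity f P₂ → P₁ = P₂

/-- A kernel is characteristic if the kernel mean embedding
`μ ↦ (y ↦ ∫ k(x,y) dμ(x))` is injective on probability measures. -/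
def IsCharacteristic {Z : Type*} [MeasurableSpace Z] (k : Z → Z → ℝ) : Prop :=
  ∀ μ₁ μ₂ : Measure Z, IsProbabilityMeasure μ₁ → IsProbabilityMeasure μ₂ →
    (∀ y, ∫ x, k x y ∂μ₁ = ∫ x, k x y ∂μ₂) → μ₁ = μ₂

end

/-
Let `Φ` be a feature map of `k`. The vector `φ x = ∫ f(y;x) Φ(y) dy` satisfies
`⟪φ x₁, φ x₂⟫ = k_f(x₁, x₂)`, so `k_f` is a bounded measurable positive-definite kernel, and by
Fubini the `k`-mean embedding of the mixture `f_P` is `∫ φ dP`. Both covariances are built only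
from the pairings of mean embeddings, `⟪∫ φ dP, ∫ φ dQ⟫ = ∬ k_f dP dQ = ⟪∫ Ψ dP, ∫ Ψ dQ⟫` for
any feature map `Ψ` of `k_f`, hence they agree. Finally, the mean embedding of a measure is
determined by its pairings with the features, so `k_f`-indistinguishable `P₁, P₂` have equal
`k`-mean embeddings of `f_{P₁}, f_{P₂}`; if `k` is characteristic the mixtures coincide, and
identifiability gives `P₁ = P₂`.
-/

open Function

section Gram

variable {X : Type*} {E E' : Type*}
  [NormedAddCommGroup E] [InnerProductSpace ℝ E] [NormedAddCommGroup E'] [InnerProductSpace ℝ E']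

lemma exists_norm_le_of_inner_eq {Φ : X → E} {κ : X → X → ℝ}
    (hΦ : ∀ x x', ⟪Φ x, Φ x'⟫ = κ x x') (hκ : ∃ C, ∀ x x', |κ x x'| ≤ C) :
    ∃ B, ∀ x, ‖Φ x‖ ≤ B := by
  obtain ⟨C, hC⟩ := hκ
  refine ⟨√C, fun x => ?_⟩
  have hsq : ‖Φ x‖ ^ 2 ≤ C := by
    rw [← real_inner_self_eq_norm_sq, hΦ]
    exact (le_abs_self _).trans (hC x x)
  simpa using Real.abs_le_sqrt hsq

variable [MeasurableSpace X]

lemma isKernel_of_inner_eq {Φ : X → E} {κ : X → X → ℝ} (hΦm : StronglyMeasurable Φ) {B : ℝ}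
    (hΦB : ∀ x, ‖Φ x‖ ≤ B) (hΦ : ∀ x x', ⟪Φ x, Φ x'⟫ = κ x x') : IsKernel κ where
  measurable := by
    have : uncurry κ = fun p : X × X => ⟪Φ p.1, Φ p.2⟫ := funext fun p => (hΦ p.1 p.2).symm
    rw [this]
    exact ((hΦm.comp_measurable measurable_fst).inner
      (hΦm.comp_measurable measurable_snd)).measurable
  bounded := ⟨B * B, fun x x' => by
    rw [← hΦ]
    exact (abs_real_inner_le_norm _ _).trans
      (mul_le_mul (hΦB x) (hΦB x') (norm_nonneg _) ((norm_nonneg _).trans (hΦB x)))⟩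
  symm x x' := by rw [← hΦ, ← hΦ, real_inner_comm]
  posDef n x c := by
    have hsum : ∑ i, ∑ j, c i * c j * κ (x i) (x j)
        = ⟪∑ i, c i • Φ (x i), ∑ j, c j • Φ (x j)⟫ := by
      rw [sum_inner]
      refine Finset.sum_congr rfl fun i _ => ?_
      rw [real_inner_smul_left, inner_sum, Finset.mul_sum]
      refine Finset.sum_congr rfl fun j _ => ?_
      rw [real_inner_smul_right, hΦ]
      ring
    rw [hsum]
    exact real_inner_self_nonneg

variable {Ω : Type*} [MeasurableSpace Ω]

lemma integrable_integral_of_norm_le {Φ : X → E} (hΦm : StronglyMeasurable Φ) {B : ℝ}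
    (hΦB : ∀ x, ‖Φ x‖ ≤ B) {P : Ω → Measure X} (hPm : Measurable P)
    [hP : ∀ ω, IsProbabilityMeasure (P ω)] (Pr : Measure Ω) [IsFiniteMeasure Pr] :
    Integrable (fun ω => ∫ x, Φ x ∂P ω) Pr := by
  let κ : Kernel Ω X := ⟨P, hPm⟩
  have : IsMarkovKernel κ := ⟨hP⟩
  have hm : StronglyMeasurable fun ω => ∫ x, Φ x ∂κ ω :=
    StronglyMeasurable.integral_kernel_prod_right (hΦm.comp_measurable measurable_snd)
  refine .of_bound hm.aestronglyMeasurable B (ae_of_all _ fun ω => ?_)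
  simpa using norm_integral_le_of_norm_le_const (μ := P ω) (ae_of_all _ hΦB)

variable [CompleteSpace E] [CompleteSpace E']

lemma inner_integral_integral {Z Z' : Type*} [MeasurableSpace Z] [MeasurableSpace Z']
    {Φ : Z → E} {Ψ : Z' → E} {P : Measure Z} {Q : Measure Z'}
    (hΦ : Integrable Φ P) (hΨ : Integrable Ψ Q) :
    ⟪∫ z, Φ z ∂P, ∫ z', Ψ z' ∂Q⟫ = ∫ z, ∫ z', ⟪Φ z, Ψ z'⟫ ∂Q ∂P := by
  rw [real_inner_comm, ← integral_inner hΦ]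
  refine integral_congr_ae (ae_of_all _ fun z => ?_)
  dsimp only
  rw [real_inner_comm, ← integral_inner hΨ]

lemma integral_eq_integral_iff_of_inner_eq {Φ : X → E} {κ : X → X → ℝ}
    (hΦ : ∀ x x', ⟪Φ x, Φ x'⟫ = κ x x') {μ₁ μ₂ : Measure X}
    (h₁ : Integrable Φ μ₁) (h₂ : Integrable Φ μ₂) :
    (∀ x', ∫ x, κ x x' ∂μ₁ = ∫ x, κ x x' ∂μ₂) ↔ ∫ x, Φ x ∂μ₁ = ∫ x, Φ x ∂μ₂ := by
  have pairing : ∀ μ : Measure X, Integrable Φ μ →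
      ∀ x', ∫ x, κ x x' ∂μ = ⟪∫ x, Φ x ∂μ, Φ x'⟫ := by
    intro μ h x'
    rw [real_inner_comm, ← integral_inner h]
    refine integral_congr_ae (ae_of_all _ fun x => ?_)
    dsimp only
    rw [← hΦ, real_inner_comm]
  simp only [pairing μ₁ h₁, pairing μ₂ h₂]
  refine ⟨fun h => ?_, fun h x' => by rw [h]⟩
  -- `∫ Φ dμ₁ - ∫ Φ dμ₂` is orthogonal to every feature, hence to both mean embeddings
  have horth : ∀ μ : Measure X, Integrable Φ μ →
      ⟪∫ x, Φ x ∂μ₁ - ∫ x, Φ x ∂μ₂, ∫ x, Φ x ∂μ⟫ = 0 := by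
    intro μ hμ
    rw [← integral_inner hμ]
    simp [inner_sub_left, h]
  rw [← sub_eq_zero, ← inner_self_eq_zero (𝕜 := ℝ), inner_sub_right, horth μ₁ h₁, horth μ₂ h₂,
    sub_zero]

lemma isCharacteristic_iff_integral_injective {Φ : X → E} {κ : X → X → ℝ}
    (hΦm : StronglyMeasurable Φ) {B : ℝ} (hΦB : ∀ x, ‖Φ x‖ ≤ B)
    (hΦ : ∀ x x', ⟪Φ x, Φ x'⟫ = κ x x') :
    IsCharacteristic κ ↔ ∀ μ₁ μ₂ : Measure X, IsProbabilityMeasure μ₁ →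
      IsProbabilityMeasure μ₂ → ∫ x, Φ x ∂μ₁ = ∫ x, Φ x ∂μ₂ → μ₁ = μ₂ := by
  have hint : ∀ μ : Measure X, IsProbabilityMeasure μ → Integrable Φ μ := fun μ _ =>
    .of_bound hΦm.aestronglyMeasurable B (ae_of_all _ hΦB)
  refine forall₂_congr fun μ₁ μ₂ => forall₂_congr fun h₁ h₂ => ?_
  rw [integral_eq_integral_iff_of_inner_eq hΦ (hint μ₁ h₁) (hint μ₂ h₂)]

lemma inner_sub_integral_eq_of_inner_eq {A B : Ω → E} {A' B' : Ω → E'} {Pr : Measure Ω}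
    (hA : Integrable A Pr) (hB : Integrable B Pr) (hA' : Integrable A' Pr)
    (hB' : Integrable B' Pr) (hAB : ∀ ω ω', ⟪A ω, B ω'⟫ = ⟪A' ω, B' ω'⟫) (ω : Ω) :
    ⟪A ω - ∫ ω', A ω' ∂Pr, B ω - ∫ ω', B ω' ∂Pr⟫
      = ⟪A' ω - ∫ ω', A' ω' ∂Pr, B' ω - ∫ ω', B' ω' ∂Pr⟫ := by
  have hmeanB : ∀ ω, ⟪A ω, ∫ ω', B ω' ∂Pr⟫ = ⟪A' ω, ∫ ω', B' ω' ∂Pr⟫ := fun ω => by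
    rw [← integral_inner hB, ← integral_inner hB']
    exact integral_congr_ae (ae_of_all _ (hAB ω))
  have hmeanAB : ⟪∫ ω, A ω ∂Pr, ∫ ω', B ω' ∂Pr⟫ = ⟪∫ ω, A' ω ∂Pr, ∫ ω', B' ω' ∂Pr⟫ := by
    rw [inner_integral_integral hA hB, inner_integral_integral hA' hB']
    simp only [hAB]
  have hmeanA : ⟪∫ ω', A ω' ∂Pr, B ω⟫ = ⟪∫ ω', A' ω' ∂Pr, B' ω⟫ := by
    rw [real_inner_comm, ← integral_inner hA, real_inner_comm (B' ω), ← integral_inner hA']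
    refine integral_congr_ae (ae_of_all _ fun ω' => ?_)
    dsimp only
    rw [real_inner_comm, hAB, real_inner_comm]
  simp only [inner_sub_left, inner_sub_right, hAB ω ω, hmeanB, hmeanA, hmeanAB]

/-- Covariances of random mean embeddings only see the Gram matrix of the features. -/
lemma integral_inner_sub_integral_eq_of_inner_eq {Φ : X → E} {Ψ : X → E'}
    (hΦm : StronglyMeasurable Φ) (hΨm : StronglyMeasurable Ψ) {B : ℝ} (hΦB : ∀ x, ‖Φ x‖ ≤ B)
    (hgram : ∀ x x', ⟪Φ x, Φ x'⟫ = ⟪Ψ x, Ψ x'⟫) (Pr : Measure Ω) [IsFiniteMeasure Pr]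
    {P₁ P₂ : Ω → Measure X} (hP₁m : Measurable P₁) (hP₂m : Measurable P₂)
    [∀ ω, IsProbabilityMeasure (P₁ ω)] [∀ ω, IsProbabilityMeasure (P₂ ω)] :
    ∫ ω, ⟪∫ x, Φ x ∂P₁ ω - ∫ ω', ∫ x, Φ x ∂P₁ ω' ∂Pr,
        ∫ x, Φ x ∂P₂ ω - ∫ ω', ∫ x, Φ x ∂P₂ ω' ∂Pr⟫ ∂Pr
      = ∫ ω, ⟪∫ x, Ψ x ∂P₁ ω - ∫ ω', ∫ x, Ψ x ∂P₁ ω' ∂Pr,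
        ∫ x, Ψ x ∂P₂ ω - ∫ ω', ∫ x, Ψ x ∂P₂ ω' ∂Pr⟫ ∂Pr := by
  have hΨB : ∀ x, ‖Ψ x‖ ≤ B := fun x => by
    have hsq := hgram x x
    rw [real_inner_self_eq_norm_sq, real_inner_self_eq_norm_sq] at hsq
    rw [← (pow_left_inj₀ (norm_nonneg _) (norm_nonneg _) two_ne_zero).mp hsq]
    exact hΦB x
  have hΦi : ∀ (P : Measure X) [IsFiniteMeasure P], Integrable Φ P := fun _ _ =>
    .of_bound hΦm.aestronglyMeasurable B (ae_of_all _ hΦB)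
  have hΨi : ∀ (P : Measure X) [IsFiniteMeasure P], Integrable Ψ P := fun _ _ =>
    .of_bound hΨm.aestronglyMeasurable B (ae_of_all _ hΨB)
  refine integral_congr_ae (ae_of_all _ <| inner_sub_integral_eq_of_inner_eq
    (integrable_integral_of_norm_le hΦm hΦB hP₁m Pr)
    (integrable_integral_of_norm_le hΦm hΦB hP₂m Pr)
    (integrable_integral_of_norm_le hΨm hΨB hP₁m Pr)
    (integrable_integral_of_norm_le hΨm hΨB hP₂m Pr) fun ω ω' => ?_)
  rw [inner_integral_integral (hΦi _) (hΦi _), inner_integral_integral (hΨi _) (hΨi _)]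
  simp only [hgram]

end Gram

namespace IsDensityKernel

variable {X Y : Type*} [MeasurableSpace X] [MeasurableSpace Y] {ν : Measure Y} {f : Y → X → ℝ}
  {E : Type*} [NormedAddCommGroup E] [NormedSpace ℝ E]

lemma integrable (hf : IsDensityKernel ν f) (x : X) : Integrable (fun y => f y x) ν :=
  .of_integral_ne_zero (by simp [hf.integral_one])

lemma norm_smul_le (hf : IsDensityKernel ν f) {Φ : Y → E} {B : ℝ} (hΦB : ∀ y, ‖Φ y‖ ≤ B)
    (y : Y) (x : X) : ‖f y x • Φ y‖ ≤ f y x * B := by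
  rw [norm_smul, Real.norm_of_nonneg (hf.nonneg y x)]
  exact mul_le_mul_of_nonneg_left (hΦB y) (hf.nonneg y x)

lemma integrable_smul (hf : IsDensityKernel ν f) {Φ : Y → E} (hΦm : StronglyMeasurable Φ)
    {B : ℝ} (hΦB : ∀ y, ‖Φ y‖ ≤ B) (x : X) : Integrable (fun y => f y x • Φ y) ν :=
  ((hf.integrable x).mul_const B).mono'
    ((hf.measurable.comp measurable_prodMk_right).stronglyMeasurable.smul hΦm).aestronglyMeasurable
    (ae_of_all _ fun y => hf.norm_smul_le hΦB y x)

lemma mixDensity_nonneg (hf : IsDensityKernel ν f) (P : Measure X) (y : Y) :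
    0 ≤ mixDensity f P y :=
  integral_nonneg fun x => hf.nonneg y x

lemma measurable_mixDensity (hf : IsDensityKernel ν f) (P : Measure X) [SFinite P] :
    Measurable (mixDensity f P) :=
  hf.measurable.stronglyMeasurable.integral_prod_right'.measurable

variable [SigmaFinite ν]

lemma integrable_prod (hf : IsDensityKernel ν f) (P : Measure X) [IsFiniteMeasure P] :
    Integrable (uncurry f) (ν.prod P) := by
  rw [integrable_prod_iff' hf.measurable.aestronglyMeasurable]
  refine ⟨ae_of_all _ hf.integrable, ?_⟩
  simp [abs_of_nonneg, hf.nonneg, hf.integral_one]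

lemma integrable_smul_prod (hf : IsDensityKernel ν f) {Φ : Y → E} (hΦm : StronglyMeasurable Φ)
    {B : ℝ} (hΦB : ∀ y, ‖Φ y‖ ≤ B) (P : Measure X) [IsFiniteMeasure P] :
    Integrable (fun p : Y × X => f p.1 p.2 • Φ p.1) (ν.prod P) :=
  ((hf.integrable_prod P).mul_const B).mono'
    (hf.measurable.stronglyMeasurable.smul
      (hΦm.comp_measurable measurable_fst)).aestronglyMeasurable
    (ae_of_all _ fun p => hf.norm_smul_le hΦB p.1 p.2)

lemma integral_mixDensity (hf : IsDensityKernel ν f) (P : Measure X) [IsProbabilityMeasure P] :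
    ∫ y, mixDensity f P y ∂ν = 1 := by
  change ∫ y, ∫ x, f y x ∂P ∂ν = 1
  rw [integral_integral_swap (hf.integrable_prod P)]
  simp [hf.integral_one]

lemma isProbabilityMeasure_mixMeasure (hf : IsDensityKernel ν f) (P : Measure X)
    [IsProbabilityMeasure P] : IsProbabilityMeasure (mixMeasure ν f P) := by
  have hint : Integrable (mixDensity f P) ν := (hf.integrable_prod P).integral_prod_left
  constructor
  rw [mixMeasure, withDensity_apply _ MeasurableSet.univ, setLIntegral_univ,
    ← ofReal_integral_eq_lintegral_ofReal hint
      (ae_of_all _ (hf.mixDensity_nonneg P)), hf.integral_mixDensity P, ENNReal.ofReal_one]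

lemma mixDensity_ae_eq_of_mixMeasure_eq (hf : IsDensityKernel ν f) {P Q : Measure X}
    [SFinite P] [SFinite Q] (h : mixMeasure ν f P = mixMeasure ν f Q) :
    mixDensity f P =ᵐ[ν] mixDensity f Q := by
  rw [mixMeasure, mixMeasure, withDensity_eq_iff_of_sigmaFinite
    (hf.measurable_mixDensity P).ennreal_ofReal.aemeasurable
    (hf.measurable_mixDensity Q).ennreal_ofReal.aemeasurable] at h
  filter_upwards [h] with y hy
  exact (ENNReal.ofReal_eq_ofReal_iff (hf.mixDensity_nonneg P y)
    (hf.mixDensity_nonneg Q y)).mp hy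

end IsDensityKernel

section DensityFeature

variable {X Y : Type*} [MeasurableSpace X] [MeasurableSpace Y] {ν : Measure Y} {f : Y → X → ℝ}
  {E : Type*} [NormedAddCommGroup E] [InnerProductSpace ℝ E] {Φ : Y → E} {B : ℝ}

/-- The mean embedding of the probability measure with density `f(·;x)`. -/
noncomputable def densityFeature (ν : Measure Y) (f : Y → X → ℝ) (Φ : Y → E) (x : X) : E :=
  ∫ y, f y x • Φ y ∂ν

lemma norm_densityFeature_le (hf : IsDensityKernel ν f) (hΦB : ∀ y, ‖Φ y‖ ≤ B) (x : X) :
    ‖densityFeature ν f Φ x‖ ≤ B :=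
  calc ‖densityFeature ν f Φ x‖ ≤ ∫ y, f y x * B ∂ν :=
        norm_integral_le_of_norm_le ((hf.integrable x).mul_const B)
          (ae_of_all _ fun y => hf.norm_smul_le hΦB y x)
    _ = B := by rw [integral_mul_const, hf.integral_one, one_mul]

lemma stronglyMeasurable_densityFeature [SFinite ν] (hf : IsDensityKernel ν f)
    (hΦm : StronglyMeasurable Φ) : StronglyMeasurable (densityFeature ν f Φ) :=
  ((hf.measurable.comp measurable_swap).stronglyMeasurable.smul
    (hΦm.comp_measurable measurable_snd)).integral_prod_right'

variable [CompleteSpace E]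

lemma inner_densityFeature {k : Y → Y → ℝ} (hf : IsDensityKernel ν f)
    (hΦm : StronglyMeasurable Φ) (hΦB : ∀ y, ‖Φ y‖ ≤ B) (hΦ : ∀ y y', ⟪Φ y, Φ y'⟫ = k y y')
    (x₁ x₂ : X) :
    ⟪densityFeature ν f Φ x₁, densityFeature ν f Φ x₂⟫ = updatedKernel ν k f x₁ x₂ := by
  rw [densityFeature, densityFeature,
    inner_integral_integral (hf.integrable_smul hΦm hΦB x₁) (hf.integrable_smul hΦm hΦB x₂)]
  refine integral_congr_ae (ae_of_all _ fun y₁ => integral_congr_ae (ae_of_all _ fun y₂ => ?_))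
  simp only [real_inner_smul_left, real_inner_smul_right, hΦ]
  ring

lemma integral_mixMeasure_eq_integral_densityFeature [SigmaFinite ν] (hf : IsDensityKernel ν f)
    (hΦm : StronglyMeasurable Φ) (hΦB : ∀ y, ‖Φ y‖ ≤ B) (P : Measure X) [IsFiniteMeasure P] :
    ∫ y, Φ y ∂mixMeasure ν f P = ∫ x, densityFeature ν f Φ x ∂P := by
  rw [mixMeasure, integral_withDensity_eq_integral_toReal_smul
    (hf.measurable_mixDensity P).ennreal_ofReal (ae_of_all _ fun _ => ENNReal.ofReal_lt_top)]
  calc ∫ y, (ENNReal.ofReal (mixDensity f P y)).toReal • Φ y ∂ν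
      = ∫ y, ∫ x, f y x • Φ y ∂P ∂ν := integral_congr_ae (ae_of_all _ fun y => by
        dsimp only
        rw [ENNReal.toReal_ofReal (hf.mixDensity_nonneg P y), mixDensity, integral_smul_const])
    _ = ∫ x, densityFeature ν f Φ x ∂P :=
        integral_integral_swap (f := fun y x => f y x • Φ y) (hf.integrable_smul_prod hΦm hΦB P)

end DensityFeature

universe uH

theorem stmt_14_general
    {X : Type*} [MeasurableSpace X]
    {Y : Type*} [MeasurableSpace Y]
    (ν : Measure Y) [SigmaFinite ν]
    (f : Y → X → ℝ) (hf : IsDensityKernel ν f)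
    {k : Y → Y → ℝ} (hk : IsKernel k)
    {H : Type*} [NormedAddCommGroup H] [InnerProductSpace ℝ H] [CompleteSpace H]
    (F : FeatureMap k H)
    {Ω : Type*} [MeasurableSpace Ω] (Pr : Measure Ω) [IsProbabilityMeasure Pr]
    (P₁ P₂ : Ω → Measure X)
    (hP₁ : ∀ ω, IsProbabilityMeasure (P₁ ω)) (hP₂ : ∀ ω, IsProbabilityMeasure (P₂ ω))
    (hP₁m : Measurable P₁) (hP₂m : Measurable P₂) :
    -- `k_f` is a kernel on `X × X`
    IsKernel (updatedKernel ν k f) ∧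
    -- `Cov_k(f_{P̃₁}, f_{P̃₂}) = Cov_{k_f}(P̃₁, P̃₂)`
    (∀ (H' : Type uH) [NormedAddCommGroup H'] [InnerProductSpace ℝ H'] [CompleteSpace H']
      (G : FeatureMap (updatedKernel ν k f) H'),
        kerCov F Pr (fun ω => mixMeasure ν f (P₁ ω)) (fun ω => mixMeasure ν f (P₂ ω))
          = kerCov G Pr P₁ P₂) ∧
    -- identifiability and characteristicness transfer
    (Identifiable ν f → IsCharacteristic k → IsCharacteristic (updatedKernel ν k f)) := by
  obtain ⟨B, hB⟩ := exists_norm_le_of_inner_eq F.repro hk.bounded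
  set φ := densityFeature ν f F.toFun
  have hφm : StronglyMeasurable φ := stronglyMeasurable_densityFeature hf F.stronglyMeasurable
  have hφB : ∀ x, ‖φ x‖ ≤ B := norm_densityFeature_le hf hB
  have hφ : ∀ x x', ⟪φ x, φ x'⟫ = updatedKernel ν k f x x' :=
    inner_densityFeature hf F.stronglyMeasurable hB F.repro
  have hmix : ∀ (P : Measure X) [IsFiniteMeasure P],
      ∫ y, F.toFun y ∂mixMeasure ν f P = ∫ x, φ x ∂P := fun P _ =>
    integral_mixMeasure_eq_integral_densityFeature hf F.stronglyMeasurable hB P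
  refine ⟨isKernel_of_inner_eq hφm hφB hφ, fun H' _ _ _ G => ?_, fun hid hchar => ?_⟩
  · simp only [kerCov, meanEmb, hmix]
    exact integral_inner_sub_integral_eq_of_inner_eq hφm G.stronglyMeasurable hφB
      (fun x x' => by rw [hφ, G.repro]) Pr hP₁m hP₂m
  · rw [isCharacteristic_iff_integral_injective F.stronglyMeasurable hB F.repro] at hchar
    rw [isCharacteristic_iff_integral_injective hφm hφB hφ]
    intro μ₁ μ₂ h₁ h₂ hμ
    refine hid μ₁ μ₂ h₁ h₂ (hf.mixDensity_ae_eq_of_mixMeasure_eq (hchar _ _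
      (hf.isProbabilityMeasure_mixMeasure μ₁) (hf.isProbabilityMeasure_mixMeasure μ₂) ?_))
    rw [hmix, hmix, hμ]

theorem stmt_14
    {X : Type*} [TopologicalSpace X] [PolishSpace X] [LocallyCompactSpace X]
    [MeasurableSpace X] [BorelSpace X]
    {Y : Type*} [TopologicalSpace Y] [PolishSpace Y] [LocallyCompactSpace Y]
    [MeasurableSpace Y] [BorelSpace Y]
    (ν : Measure Y) [SigmaFinite ν]
    (f : Y → X → ℝ) (hf : IsDensityKernel ν f)
    {k : Y → Y → ℝ} (hk : IsKernel k)
    {H : Type*} [NormedAddCommGroup H] [InnerProductSpace ℝ H] [CompleteSpace H]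
    (F : FeatureMap k H)
    {Ω : Type*} [MeasurableSpace Ω] (Pr : Measure Ω) [IsProbabilityMeasure Pr]
    (P₁ P₂ : Ω → Measure X)
    (hP₁ : ∀ ω, IsProbabilityMeasure (P₁ ω)) (hP₂ : ∀ ω, IsProbabilityMeasure (P₂ ω))
    (hP₁m : Measurable P₁) (hP₂m : Measurable P₂) :
    -- `k_f` is a kernel on `X × X`
    IsKernel (updatedKernel ν k f) ∧
    -- `Cov_k(f_{P̃₁}, f_{P̃₂}) = Cov_{k_f}(P̃₁, P̃₂)`
    (∀ (H' : Type uH) [NormedAddCommGroup H'] [InnerProductSpace ℝ H'] [CompleteSpace H']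
      (G : FeatureMap (updatedKernel ν k f) H'),
        kerCov F Pr (fun ω => mixMeasure ν f (P₁ ω)) (fun ω => mixMeasure ν f (P₂ ω))
          = kerCov G Pr P₁ P₂) ∧
    -- identifiability and characteristicness transfer
    (Identifiable ν f → IsCharacteristic k → IsCharacteristic (updatedKernel ν k f)) :=
  stmt_14_general ν f hf hk F Pr P₁ P₂ hP₁ hP₂ hP₁m hP₂m
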